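/- arXiv:2405.04330 — 3 statements merged into one kernel-verified Lean document; each statement's English description precedes it below -/
import Mathlib

section
/- Let A ∈ ℝ^{m×n} be partitioned in blocks A = [[A11, A12],[A21, A22]] with A11 ∈ ℝ^{k×k}. If A11 is a local maximum volume k×k submatrix of A, then A11 is invertible and every entry of A11⁻¹·A12 and of A21·A11⁻¹ has absolute value at most 1; that is, ‖A11⁻¹A12‖_max ≤ 1 and ‖A21A11⁻¹‖_max ≤ 1 (the partial LU factorization with pivot A11 satisfies interpolative bounds with ν = 1). -/
open Matrix

/-- The spectral norm (`‖·‖₂`, largest singular value) of a real matrix. -/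
noncomputable def specNorm {m n : Type*} [Fintype m] [Fintype n] [DecidableEq n]
    (A : Matrix m n ℝ) : ℝ :=
  ‖LinearMap.toContinuousLinearMap (Matrix.toEuclideanLin A)‖

/-- `sval A j` is the `j`-th largest singular value of `A` (1-indexed), characterized as the
distance, in the spectral norm, from `A` to the set of matrices of rank `< j`. -/
noncomputable def sval {m n : Type*} [Fintype m] [Fintype n] [DecidableEq n]
    (A : Matrix m n ℝ) (j : ℕ) : ℝ :=
  sInf {x : ℝ | ∃ B : Matrix m n ℝ, B.rank < j ∧ x = specNorm (A - B)}

/-- The volume of a matrix: the product of its singular values. -/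
noncomputable def vol {m n : Type*} [Fintype m] [Fintype n] [DecidableEq n]
    (A : Matrix m n ℝ) : ℝ :=
  ∏ j ∈ Finset.Icc 1 (min (Fintype.card m) (Fintype.card n)), sval A j

/-- `DiffOne b r` : `r` is an injective selection of indices whose image (index set)
differs from the index set selected by `b` in at most one element. -/
def DiffOne {ι α : Type*} [Fintype ι] [DecidableEq α] (b r : ι → α) : Prop :=
  Function.Injective r ∧ (Finset.univ.image r \ Finset.univ.image b).card ≤ 1

/-!
The singular values defined by the best-approximation formula in `sval` are the spectral ones,
`LinearMap.singularValues`: the truncated spectral decomposition of `Tᴴ T` attains the infimum,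
and the span of the first `i + 1` eigenvectors of `Tᴴ T` meets the kernel of every map of rank
at most `i`, which bounds it from below. Hence `vol A = |det A|` for square `A`. Replacing
column `i` of `A₁₁` by column `j` of `A₁₂` changes one column, and by Cramer's rule the new
determinant is `det A₁₁ * (A₁₁⁻¹ A₁₂) i j`; local maximality bounds its absolute value by
`|det A₁₁|`. Rows are handled in the same way.
-/

open Module InnerProductSpace

namespace LinearMap

variable {𝕜 E F : Type*} [RCLike 𝕜]
  [NormedAddCommGroup E] [InnerProductSpace 𝕜 E] [FiniteDimensional 𝕜 E]
  [NormedAddCommGroup F] [InnerProductSpace 𝕜 F] [FiniteDimensional 𝕜 F]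
  (T : E →ₗ[𝕜] F)

section EigenvectorBasis

variable {n : ℕ} (hn : finrank 𝕜 E = n)

local notation "v" => T.isSymmetric_adjoint_comp_self.eigenvectorBasis hn

theorem norm_apply_sq_eq_sum_singularValues (x : E) :
    ‖T x‖ ^ 2 = ∑ l : Fin n, T.singularValues l ^ 2 * ‖⟪v l, x⟫_𝕜‖ ^ 2 := by
  have hT := T.isSymmetric_adjoint_comp_self
  have hcoord : ∀ l, ⟪v l, adjoint T (T x)⟫_𝕜 = T.singularValues l ^ 2 * ⟪v l, x⟫_𝕜 := by
    intro l
    have := hT.eigenvectorBasis_apply_self_apply hn x l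
    simp only [OrthonormalBasis.repr_apply_apply, comp_apply] at this
    rw [this, ← T.sq_singularValues_fin hn l, RCLike.ofReal_pow]
  have h : (‖T x‖ ^ 2 : 𝕜) = ∑ l : Fin n, (T.singularValues l ^ 2 * ‖⟪v l, x⟫_𝕜‖ ^ 2 : ℝ) := by
    push_cast
    rw [← inner_self_eq_norm_sq_to_K, ← adjoint_inner_right,
      ← (hT.eigenvectorBasis hn).sum_inner_mul_inner]
    refine Finset.sum_congr rfl fun l _ => ?_
    rw [hcoord, ← inner_conj_symm, mul_left_comm, RCLike.conj_mul]
  exact_mod_cast h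

theorem singularValues_mul_norm_le_norm_apply {i : Fin n} {x : E}
    (hx : ∀ l, i < l → ⟪v l, x⟫_𝕜 = 0) : T.singularValues i * ‖x‖ ≤ ‖T x‖ := by
  refine (sq_le_sq₀ (mul_nonneg (T.singularValues_nonneg _) (norm_nonneg _)) (norm_nonneg _)).1 ?_
  rw [mul_pow, T.norm_apply_sq_eq_sum_singularValues hn, ← (v).sum_sq_norm_inner_right,
    Finset.mul_sum]
  refine Finset.sum_le_sum fun l _ => ?_
  rcases le_or_gt l i with hli | hil
  · gcongr
    exacts [T.singularValues_nonneg _, T.singularValues_antitone (Fin.val_le_of_le hli)]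
  · simp [hx l hil]

theorem norm_apply_le_singularValues_mul_norm {i : Fin n} {x : E}
    (hx : ∀ l < i, ⟪v l, x⟫_𝕜 = 0) : ‖T x‖ ≤ T.singularValues i * ‖x‖ := by
  refine (sq_le_sq₀ (norm_nonneg _) (mul_nonneg (T.singularValues_nonneg _) (norm_nonneg _))).1 ?_
  rw [mul_pow, T.norm_apply_sq_eq_sum_singularValues hn, ← (v).sum_sq_norm_inner_right,
    Finset.mul_sum]
  refine Finset.sum_le_sum fun l _ => ?_
  rcases lt_or_ge l i with hli | hil
  · simp [hx l hli]
  · gcongr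
    exacts [T.singularValues_nonneg _, T.singularValues_antitone (Fin.val_le_of_le hil)]

end EigenvectorBasis

theorem singularValues_le_opNorm_sub {i : ℕ} {B : E →ₗ[𝕜] F} (hB : finrank 𝕜 (range B) ≤ i) :
    T.singularValues i ≤ ‖toContinuousLinearMap (T - B)‖ := by
  rcases le_or_gt (finrank 𝕜 E) i with hi | hi
  · rw [T.singularValues_of_finrank_le hi]
    exact norm_nonneg _
  set b := T.isSymmetric_adjoint_comp_self.eigenvectorBasis rfl
  set s := Finset.Iic (⟨i, hi⟩ : Fin (finrank 𝕜 E))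
  set g := Fintype.linearCombination 𝕜 (fun l : s => b l)
  have hg : Function.Injective g :=
    LinearIndependent.fintypeLinearCombination_injective
      (b.orthonormal.linearIndependent.comp _ Subtype.val_injective)
  have hBg_not_inj : ¬ Function.Injective (B ∘ₗ g) := by
    intro h
    have := (LinearMap.finrank_range_of_inj h).symm.trans_le
      ((Submodule.finrank_mono (range_comp_le_range g B)).trans hB)
    rw [Module.finrank_fintype_fun_eq_card, Fintype.card_coe, Fin.card_Iic, Fin.val_mk] at this
    omega
  obtain ⟨c, hBc, hc⟩ : ∃ c, B (g c) = 0 ∧ c ≠ 0 := by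
    contrapose! hBg_not_inj
    exact (injective_iff_map_eq_zero (B ∘ₗ g)).2 hBg_not_inj
  have hx : g c ≠ 0 := (map_ne_zero_iff g hg).2 hc
  have hcoord : ∀ m, (⟨i, hi⟩ : Fin _) < m → ⟪b m, g c⟫_𝕜 = 0 := by
    intro m hm
    simp only [g, Fintype.linearCombination_apply, inner_sum, inner_smul_right]
    refine Finset.sum_eq_zero fun l _ => ?_
    rw [b.orthonormal.2 (ne_of_gt (lt_of_le_of_lt (Finset.mem_Iic.1 l.2) hm)), mul_zero]
  have key : T.singularValues i * ‖g c‖ ≤ ‖toContinuousLinearMap (T - B)‖ * ‖g c‖ :=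
    calc T.singularValues i * ‖g c‖ ≤ ‖T (g c)‖ :=
          T.singularValues_mul_norm_le_norm_apply rfl hcoord
      _ = ‖toContinuousLinearMap (T - B) (g c)‖ := by simp [hBc]
      _ ≤ _ := ContinuousLinearMap.le_opNorm _ _
  exact le_of_mul_le_mul_right key (norm_pos_iff.2 hx)

theorem exists_opNorm_sub_le_singularValues (i : ℕ) :
    ∃ B : E →ₗ[𝕜] F, finrank 𝕜 (range B) ≤ i ∧
      ‖toContinuousLinearMap (T - B)‖ ≤ T.singularValues i := by
  rcases le_or_gt (finrank 𝕜 E) i with hi | hi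
  · refine ⟨T, (finrank_range_le T).trans hi, ?_⟩
    simpa using T.singularValues_nonneg i
  set b := T.isSymmetric_adjoint_comp_self.eigenvectorBasis rfl
  set s := Finset.Iio (⟨i, hi⟩ : Fin (finrank 𝕜 E))
  set P : E →ₗ[𝕜] E := ∑ l ∈ s, (innerₛₗ 𝕜 (b l)).smulRight (b l)
  have hP : ∀ x, P x = ∑ l ∈ s, ⟪b l, x⟫_𝕜 • b l := fun x => by simp [P]
  refine ⟨T ∘ₗ P, ?_, ?_⟩
  · have hrange : range P ≤ Submodule.span 𝕜 (Set.range fun l : s => b l) := by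
      rintro _ ⟨x, rfl⟩
      rw [hP, ← Finset.sum_coe_sort]
      exact Submodule.sum_mem _ fun l _ => Submodule.smul_mem _ _ (Submodule.subset_span ⟨l, rfl⟩)
    calc finrank 𝕜 (range (T ∘ₗ P)) ≤ finrank 𝕜 (range P) := by
          rw [range_comp]; exact Submodule.finrank_map_le _ _
      _ ≤ Fintype.card s := (Submodule.finrank_mono hrange).trans (finrank_range_le_card _)
      _ = i := by rw [Fintype.card_coe, Fin.card_Iio]
  refine ContinuousLinearMap.opNorm_le_bound _ (T.singularValues_nonneg i) fun x => ?_
  have hcoord : ∀ m, ⟪b m, x - P x⟫_𝕜 = if m ∈ s then 0 else ⟪b m, x⟫_𝕜 := by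
    intro m
    simp only [hP, inner_sub_right, inner_sum, inner_smul_right,
      orthonormal_iff_ite.1 b.orthonormal, mul_ite, mul_one, mul_zero, Finset.sum_ite_eq]
    split_ifs <;> simp
  have hproj : ‖x - P x‖ ≤ ‖x‖ := by
    refine (sq_le_sq₀ (norm_nonneg _) (norm_nonneg _)).1 ?_
    rw [← b.sum_sq_norm_inner_right, ← b.sum_sq_norm_inner_right]
    refine Finset.sum_le_sum fun m _ => ?_
    rw [hcoord]
    split_ifs <;> simp
  calc ‖toContinuousLinearMap (T - T ∘ₗ P) x‖ = ‖T (x - P x)‖ := by simp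
    _ ≤ T.singularValues i * ‖x - P x‖ :=
        T.norm_apply_le_singularValues_mul_norm rfl (i := ⟨i, hi⟩) fun m hm => by
          rw [hcoord, if_pos (Finset.mem_Iio.2 hm)]
    _ ≤ T.singularValues i * ‖x‖ := by gcongr; exact T.singularValues_nonneg i

theorem isLeast_singularValues (i : ℕ) :
    IsLeast {x | ∃ B : E →ₗ[𝕜] F, finrank 𝕜 (range B) ≤ i ∧
      x = ‖toContinuousLinearMap (T - B)‖} (T.singularValues i) := by
  obtain ⟨B, hB, hle⟩ := T.exists_opNorm_sub_le_singularValues i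
  exact ⟨⟨B, hB, le_antisymm (T.singularValues_le_opNorm_sub hB) hle⟩,
    fun _ ⟨_, hB, hx⟩ => hx ▸ T.singularValues_le_opNorm_sub hB⟩

end LinearMap

theorem Matrix.rank_eq_finrank_range_toEuclideanLin {𝕜 m n : Type*} [RCLike 𝕜] [Fintype m]
    [Fintype n] [DecidableEq n] (B : Matrix m n 𝕜) :
    B.rank = finrank 𝕜 (toEuclideanLin B).range := by
  rw [toEuclideanLin_eq_toLin_orthonormal, rank_eq_finrank_range_toLin B
    (EuclideanSpace.basisFun m 𝕜).toBasis (EuclideanSpace.basisFun n 𝕜).toBasis]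

theorem Matrix.det_toEuclideanLin {𝕜 n : Type*} [RCLike 𝕜] [Fintype n] [DecidableEq n]
    (A : Matrix n n 𝕜) :
    LinearMap.det (toEuclideanLin A : EuclideanSpace 𝕜 n →ₗ[𝕜] EuclideanSpace 𝕜 n) = A.det := by
  rw [toEuclideanLin_eq_toLin_orthonormal, LinearMap.det_toLin]

section Volume

variable {m n : Type*} [Fintype m] [Fintype n] [DecidableEq n]

theorem sval_add_one (A : Matrix m n ℝ) (i : ℕ) :
    sval A (i + 1) = (toEuclideanLin A).singularValues i := by
  rw [← ((toEuclideanLin A).isLeast_singularValues i).csInf_eq, sval]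
  congr 1
  ext x
  simp only [Set.mem_ofPred_eq, toEuclideanLin.surjective.exists, specNorm, map_sub,
    rank_eq_finrank_range_toEuclideanLin, Nat.lt_succ_iff]

theorem vol_eq_prod_singularValues (A : Matrix m n ℝ) :
    vol A = ∏ i ∈ Finset.range (min (Fintype.card m) (Fintype.card n)),
      (toEuclideanLin A).singularValues i := by
  simp only [vol, ← sval_add_one]
  rw [Finset.range_eq_Ico, Finset.prod_Ico_add', zero_add, Finset.Ico_add_one_right_eq_Icc]

theorem vol_eq_abs_det [DecidableEq m] (A : Matrix m m ℝ) : vol A = |A.det| := by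
  rw [vol_eq_prod_singularValues, min_self, ← finrank_euclideanSpace (𝕜 := ℝ),
    ← LinearMap.normDet_eq_prod_singularValues, LinearMap.normDet_eq_abs_det, det_toEuclideanLin]

end Volume

namespace Matrix

variable {n α : Type*} [Fintype n] [DecidableEq n] [CommRing α]

theorem det_updateCol_eq_det_mul_inv_mulVec (A : Matrix n n α) (h : IsUnit A.det) (i : n)
    (b : n → α) : (A.updateCol i b).det = A.det * (A⁻¹ *ᵥ b) i := by
  rw [← cramer_apply, ← det_smul_inv_mulVec_eq_cramer A b h, Pi.smul_apply, smul_eq_mul]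

theorem det_updateRow_eq_det_mul_vecMul_inv (A : Matrix n n α) (h : IsUnit A.det) (i : n)
    (b : n → α) : (A.updateRow i b).det = A.det * (b ᵥ* A⁻¹) i := by
  rw [← det_transpose, ← updateCol_transpose, ← cramer_apply,
    ← det_smul_inv_vecMul_eq_cramer_transpose A b h, Pi.smul_apply, smul_eq_mul]

end Matrix

section Blocks

variable {k m n α : Type*} [DecidableEq k]
  (A₁₁ : Matrix k k α) (A₁₂ : Matrix k n α) (A₂₁ : Matrix m k α) (A₂₂ : Matrix m n α)

theorem submatrix_fromBlocks_inl_update_inr (i : k) (j : n) :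
    (fromBlocks A₁₁ A₁₂ A₂₁ A₂₂).submatrix Sum.inl (Function.update Sum.inl i (Sum.inr j)) =
      A₁₁.updateCol i fun p => A₁₂ p j := by
  ext p q
  by_cases hq : q = i <;> simp [hq]

theorem submatrix_fromBlocks_update_inr_inl (i : m) (j : k) :
    (fromBlocks A₁₁ A₁₂ A₂₁ A₂₂).submatrix (Function.update Sum.inl j (Sum.inr i)) Sum.inl =
      A₁₁.updateRow j (A₂₁ i) := by
  ext p q
  by_cases hp : p = j <;> simp [hp]

end Blocks

section DiffOne

variable {ι α : Type*} [Fintype ι] [DecidableEq α] {f : ι → α}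

theorem diffOne_self (hf : Function.Injective f) : DiffOne f f :=
  ⟨hf, by simp⟩

theorem diffOne_update [DecidableEq ι] (hf : Function.Injective f) (i : ι) (a : α)
    (ha : a ∉ Set.range f) : DiffOne f (Function.update f i a) := by
  refine ⟨fun p q hpq => ?_, ?_⟩
  · simp only [Function.update_apply] at hpq
    split_ifs at hpq with hp hq hq
    · rw [hp, hq]
    · exact absurd ⟨q, hpq.symm⟩ ha
    · exact absurd ⟨p, hpq⟩ ha
    · exact hf hpq
  · have himage : Finset.univ.image (Function.update f i a) ⊆ Finset.univ.image f ∪ {a} := by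
      intro x hx
      obtain ⟨p, -, rfl⟩ := Finset.mem_image.1 hx
      by_cases hp : p = i <;> simp [hp]
    exact (Finset.card_le_card (sdiff_le_iff.2 himage)).trans
      (Finset.card_singleton a).le

end DiffOne

theorem statement_0 {k m' n' : ℕ}
    (A11 : Matrix (Fin k) (Fin k) ℝ) (A12 : Matrix (Fin k) (Fin n') ℝ)
    (A21 : Matrix (Fin m') (Fin k) ℝ) (A22 : Matrix (Fin m') (Fin n') ℝ)
    (hpos : 0 < vol A11)
    (hmax : ∀ (r : Fin k → Fin k ⊕ Fin m') (c : Fin k → Fin k ⊕ Fin n'),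
      DiffOne Sum.inl r → DiffOne Sum.inl c →
      vol ((Matrix.fromBlocks A11 A12 A21 A22).submatrix r c) ≤ vol A11) :
    IsUnit A11.det ∧
      (∀ i j, |(A11⁻¹ * A12) i j| ≤ 1) ∧
      (∀ i j, |(A21 * A11⁻¹) i j| ≤ 1) := by
  rw [vol_eq_abs_det] at hpos
  have hdet : IsUnit A11.det := (abs_pos.1 hpos).isUnit
  refine ⟨hdet, fun i j => ?_, fun i j => ?_⟩
  · have h := hmax _ _ (diffOne_self Sum.inl_injective)
      (diffOne_update Sum.inl_injective i (Sum.inr j) (by simp))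
    rw [submatrix_fromBlocks_inl_update_inr, vol_eq_abs_det, vol_eq_abs_det,
      det_updateCol_eq_det_mul_inv_mulVec _ hdet, abs_mul] at h
    exact (mul_le_iff_le_one_right hpos).1 h
  · have h := hmax _ _ (diffOne_update Sum.inl_injective j (Sum.inr i) (by simp))
      (diffOne_self Sum.inl_injective)
    rw [submatrix_fromBlocks_update_inr_inl, vol_eq_abs_det, vol_eq_abs_det,
      det_updateRow_eq_det_mul_vecMul_inv _ hdet, abs_mul] at h
    exact (mul_le_iff_le_one_right hpos).1 h
end

section
/- Let A ∈ ℝ^{m×n} be partitioned in blocks A = [[A11, A12],[A21, A22]] with A11 ∈ ℝ^{k×k} invertible, and let A_k = [[A11, A12],[A21, A21·A11⁻¹·A12]] be the rank-k approximant of the partial LU factorization. Then for every 1 ≤ j ≤ k: σ_j(A_k) ≤ (1 + ‖A21·A11⁻¹‖₂)·(1 + ‖A11⁻¹·A12‖₂)·σ_j(A11). -/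
open Matrix

/-! Because `A₁₁` is invertible, the partial LU approximant factors as
`[1; A₂₁ A₁₁⁻¹] * A₁₁ * [1, A₁₁⁻¹ A₁₂]`. With `σ_j` read as the spectral-norm distance to matrices
of rank `< j`, `σ_j (P A Q) ≤ ‖P‖ ‖Q‖ σ_j (A)`: if `B` has rank `< j` then so does `P B Q`, and
`‖P A Q - P B Q‖ ≤ ‖P‖ ‖A - B‖ ‖Q‖`. Finally `‖[1; C]‖ ≤ 1 + ‖C‖`, by the C⋆-identity
`‖M‖² = ‖Mᴴ M‖` applied to `[1; C]ᴴ [1; C] = 1 + Cᴴ C`. -/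

open scoped Matrix.Norms.L2Operator

lemma specNorm_eq_norm {m n : Type*} [Fintype m] [Fintype n] [DecidableEq n]
    (A : Matrix m n ℝ) : specNorm A = ‖A‖ := rfl

namespace Matrix

variable {𝕜 m m₁ m₂ n n₁ n₂ : Type*} [RCLike 𝕜] [Fintype m] [Fintype m₁] [Fintype m₂]
  [Fintype n] [Fintype n₁] [Fintype n₂] [DecidableEq n]

lemma l2_opNorm_fromRows_le (A : Matrix m₁ n 𝕜) (B : Matrix m₂ n 𝕜) :
    ‖fromRows A B‖ ≤ ‖A‖ + ‖B‖ := by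
  have h : ‖fromRows A B‖ * ‖fromRows A B‖ ≤ (‖A‖ + ‖B‖) * (‖A‖ + ‖B‖) :=
    calc ‖fromRows A B‖ * ‖fromRows A B‖ = ‖Aᴴ * A + Bᴴ * B‖ := by
          rw [← l2_opNorm_conjTranspose_mul_self, conjTranspose_fromRows_eq_fromCols_conjTranspose,
            fromCols_mul_fromRows]
      _ ≤ ‖A‖ * ‖A‖ + ‖B‖ * ‖B‖ := by
          grw [norm_add_le, l2_opNorm_conjTranspose_mul_self, l2_opNorm_conjTranspose_mul_self]
      _ ≤ (‖A‖ + ‖B‖) * (‖A‖ + ‖B‖) := by nlinarith [norm_nonneg A, norm_nonneg B]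
  exact (mul_self_le_mul_self_iff (norm_nonneg _) (by positivity)).mpr h

lemma l2_opNorm_fromCols_le [DecidableEq n₁] [DecidableEq n₂]
    (A : Matrix n n₁ 𝕜) (B : Matrix n n₂ 𝕜) :
    ‖fromCols A B‖ ≤ ‖A‖ + ‖B‖ := by
  rw [← l2_opNorm_conjTranspose, conjTranspose_fromCols_eq_fromRows_conjTranspose,
    ← l2_opNorm_conjTranspose A, ← l2_opNorm_conjTranspose B]
  exact l2_opNorm_fromRows_le _ _

lemma l2_opNorm_one_le : ‖(1 : Matrix n n 𝕜)‖ ≤ 1 := by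
  rw [← diagonal_one, l2_opNorm_diagonal]
  exact (pi_norm_const_le (1 : 𝕜)).trans_eq norm_one

end Matrix

section SingularValues

variable {m n k l : Type*} [Fintype m] [Fintype n] [Fintype k] [Fintype l]
  [DecidableEq n] [DecidableEq k] [DecidableEq l]

lemma sval_nonneg (A : Matrix m n ℝ) (j : ℕ) : 0 ≤ sval A j :=
  Real.sInf_nonneg <| by rintro _ ⟨B, -, rfl⟩; exact norm_nonneg _

lemma sval_le_specNorm_sub {A B : Matrix m n ℝ} {j : ℕ} (hB : B.rank < j) :
    sval A j ≤ specNorm (A - B) :=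
  csInf_le ⟨0, by rintro _ ⟨B, -, rfl⟩; exact norm_nonneg _⟩ ⟨B, hB, rfl⟩

theorem sval_mul_mul_le (P : Matrix m k ℝ) (A : Matrix k l ℝ) (Q : Matrix l n ℝ) (j : ℕ) :
    sval (P * A * Q) j ≤ ‖P‖ * ‖Q‖ * sval A j := by
  obtain rfl | hj := Nat.eq_zero_or_pos j
  · simp [sval] -- both infima are over the empty set
  have hne : {x | ∃ B : Matrix k l ℝ, B.rank < j ∧ x = specNorm (A - B)}.Nonempty :=
    ⟨_, 0, by rwa [rank_zero], rfl⟩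
  rw [sval, sval, ← smul_eq_mul, ← Real.sInf_smul_of_nonneg (by positivity)]
  refine le_csInf hne.smul_set ?_
  rintro _ ⟨_, ⟨B, hB, rfl⟩, rfl⟩
  calc sval (P * A * Q) j ≤ specNorm (P * A * Q - P * B * Q) :=
        sval_le_specNorm_sub <|
          (rank_mul_le_left _ _).trans_lt <| (rank_mul_le_right _ _).trans_lt hB
    _ = ‖P * (A - B) * Q‖ := by rw [specNorm_eq_norm, Matrix.mul_sub, Matrix.sub_mul]
    _ ≤ ‖P‖ * ‖A - B‖ * ‖Q‖ := by grw [l2_opNorm_mul, l2_opNorm_mul]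
    _ = (‖P‖ * ‖Q‖) • specNorm (A - B) := by rw [smul_eq_mul, specNorm_eq_norm]; ring

end SingularValues

theorem Matrix.fromBlocks_eq_fromRows_mul_mul_fromCols {R k m n : Type*} [CommRing R]
    [Fintype k] [DecidableEq k] (A₁₁ : Matrix k k R) (A₁₂ : Matrix k n R) (A₂₁ : Matrix m k R)
    (h : IsUnit A₁₁.det) :
    fromBlocks A₁₁ A₁₂ A₂₁ (A₂₁ * A₁₁⁻¹ * A₁₂) =
      fromRows 1 (A₂₁ * A₁₁⁻¹) * A₁₁ * fromCols 1 (A₁₁⁻¹ * A₁₂) := by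
  rw [fromRows_mul, fromRows_mul_fromCols, Matrix.one_mul, Matrix.mul_one, Matrix.mul_one,
    mul_nonsing_inv_cancel_left _ _ h, nonsing_inv_mul_cancel_right _ _ h, Matrix.mul_assoc]

theorem statement_3_general {k m' n' : ℕ}
    (A11 : Matrix (Fin k) (Fin k) ℝ) (A12 : Matrix (Fin k) (Fin n') ℝ)
    (A21 : Matrix (Fin m') (Fin k) ℝ)
    (hinv : IsUnit A11.det) :
    ∀ j : ℕ, 1 ≤ j → j ≤ k →
      sval (Matrix.fromBlocks A11 A12 A21 (A21 * A11⁻¹ * A12)) j ≤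
        (1 + specNorm (A21 * A11⁻¹)) * (1 + specNorm (A11⁻¹ * A12)) * sval A11 j := by
  intro j _ _
  rw [Matrix.fromBlocks_eq_fromRows_mul_mul_fromCols _ _ _ hinv, specNorm_eq_norm,
    specNorm_eq_norm]
  refine (sval_mul_mul_le _ _ _ j).trans ?_
  gcongr
  · exact sval_nonneg _ _
  · exact (Matrix.l2_opNorm_fromRows_le _ _).trans (by grw [Matrix.l2_opNorm_one_le])
  · exact (Matrix.l2_opNorm_fromCols_le _ _).trans (by grw [Matrix.l2_opNorm_one_le])

theorem statement_3 {k m' n' : ℕ}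
    (A11 : Matrix (Fin k) (Fin k) ℝ) (A12 : Matrix (Fin k) (Fin n') ℝ)
    (A21 : Matrix (Fin m') (Fin k) ℝ) (A22 : Matrix (Fin m') (Fin n') ℝ)
    (hinv : IsUnit A11.det) :
    ∀ j : ℕ, 1 ≤ j → j ≤ k →
      sval (Matrix.fromBlocks A11 A12 A21 (A21 * A11⁻¹ * A12)) j ≤
        (1 + specNorm (A21 * A11⁻¹)) * (1 + specNorm (A11⁻¹ * A12)) * sval A11 j :=
  statement_3_general A11 A12 A21 hinv
end

section
/- Let A = [B C] ∈ ℝ^{m×n} where B ∈ ℝ^{m×k} is the matrix of the first k columns of A and has rank k (any column permutation is absorbed into the partition), and let B⁺ = (BᵀB)⁻¹Bᵀ denote the pseudoinverse of B. If B is a local maximum volume m×k submatrix of A (i.e., vol(B) ≥ vol(B̂) for every B̂ obtained from B by replacing one column of B with a column of C), then every entry of B⁺·C has absolute value at most 1, i.e., ‖B⁺C‖_max ≤ 1 (equivalently, for a QR factorization B = Q1·R11 the partial QR factorization satisfies the interpolative bound ‖R11⁻¹R12‖_max ≤ 1 with R12 = Q1ᵀC). -/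
open Matrix

/-!
For `M` with at least as many rows as columns, `vol M = √det (Mᵀ M)`: the distance in operator
norm from `M` to the matrices of rank `< j` is the square root of the `j`-th largest eigenvalue
of `Mᵀ M` (Eckart–Young). It is attained by `M` precomposed with the orthogonal projection onto
the top `j - 1` eigenvectors, and it cannot be smaller because a matrix of rank `< j` kills some
nonzero vector in the span of the top `j` eigenvectors.

Write the column `c` of `C` as `c = B w + r` with `w = B⁺ c` and `Bᵀ r = 0`. Putting `c` in place
of column `i` of `B` gives `B E + r eᵢᵀ`, where `E` is the identity with column `i` replaced by
`w`, so `det E = wᵢ`. The two summands have orthogonal column spaces, so the Gram matrix of the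
new matrix is `Eᵀ (Bᵀ B) E` plus the positive semidefinite rank-one matrix `‖r‖² eᵢ eᵢᵀ`, and
by the matrix determinant lemma its determinant is at least `wᵢ² det (Bᵀ B)`. Hence
`vol B̂ ≥ |wᵢ| vol B`, and since `vol B > 0` is locally maximal, `|wᵢ| ≤ 1`.
-/

open scoped InnerProductSpace
open Module

section SingularValues

variable {ι E F : Type*} [Fintype ι] [NormedAddCommGroup E] [InnerProductSpace ℝ E]
  [NormedAddCommGroup F] [InnerProductSpace ℝ F]
  {V : OrthonormalBasis ι ℝ E} {σ : ι → ℝ} {T : E →L[ℝ] F} {c : ℝ}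

-- The hypothesis `hT` below says that `V` is an eigenbasis of `T† T` with eigenvalues `σ i ^ 2`,
-- i.e. that the `σ i` are the singular values of `T` with right singular vectors `V i`.

theorem norm_apply_le_of_inner_ne_zero (hT : ∀ x, ‖T x‖ ^ 2 = ∑ i, (σ i * ⟪V i, x⟫_ℝ) ^ 2)
    (hc : 0 ≤ c) {x : E} (hx : ∀ i, ⟪V i, x⟫_ℝ ≠ 0 → |σ i| ≤ c) : ‖T x‖ ≤ c * ‖x‖ := by
  refine (sq_le_sq₀ (norm_nonneg _) (by positivity)).mp ?_
  rw [hT, mul_pow, ← V.sum_sq_norm_inner_right, Finset.mul_sum]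
  refine Finset.sum_le_sum fun i _ => ?_
  rw [Real.norm_eq_abs, sq_abs, mul_pow]
  by_cases hi : ⟪V i, x⟫_ℝ = 0
  · simp [hi]
  · refine mul_le_mul_of_nonneg_right ?_ (sq_nonneg _)
    rw [← sq_abs (σ i)]
    exact pow_le_pow_left₀ (abs_nonneg _) (hx i hi) 2

theorem mul_norm_le_norm_apply_of_inner_ne_zero
    (hT : ∀ x, ‖T x‖ ^ 2 = ∑ i, (σ i * ⟪V i, x⟫_ℝ) ^ 2)
    (hc : 0 ≤ c) {x : E} (hx : ∀ i, ⟪V i, x⟫_ℝ ≠ 0 → c ≤ |σ i|) : c * ‖x‖ ≤ ‖T x‖ := by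
  refine (sq_le_sq₀ (by positivity) (norm_nonneg _)).mp ?_
  rw [hT, mul_pow, ← V.sum_sq_norm_inner_right, Finset.mul_sum]
  refine Finset.sum_le_sum fun i _ => ?_
  rw [Real.norm_eq_abs, sq_abs, mul_pow]
  by_cases hi : ⟪V i, x⟫_ℝ = 0
  · simp [hi]
  · refine mul_le_mul_of_nonneg_right ?_ (sq_nonneg _)
    rw [← sq_abs (σ i)]
    exact pow_le_pow_left₀ hc (hx i hi) 2

theorem OrthonormalBasis.inner_eq_zero_of_mem_span_image {s : Finset ι} {x : E}
    (hx : x ∈ Submodule.span ℝ (V '' s)) {i : ι} (hi : i ∉ s) : ⟪V i, x⟫_ℝ = 0 := by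
  have hV : Submodule.span ℝ (V '' s) ≤ (ℝ ∙ V i)ᗮ := by
    refine Submodule.span_le.mpr ?_
    rintro _ ⟨l, hl, rfl⟩
    exact Submodule.mem_orthogonal_singleton_iff_inner_right.mpr
      (V.orthonormal.inner_eq_zero fun h => hi (h ▸ hl))
  exact Submodule.mem_orthogonal_singleton_iff_inner_right.mp (hV hx)

variable [FiniteDimensional ℝ E]

theorem le_opNorm_sub_of_finrank_range_lt (hT : ∀ x, ‖T x‖ ^ 2 = ∑ i, (σ i * ⟪V i, x⟫_ℝ) ^ 2)
    (hc : 0 ≤ c) {s : Finset ι} (hs : ∀ i ∈ s, c ≤ |σ i|) (S : E →L[ℝ] F)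
    (hS : finrank ℝ (LinearMap.range (S : E →ₗ[ℝ] F)) < s.card) : c ≤ ‖T - S‖ := by
  have hK : finrank ℝ (Submodule.span ℝ (V '' s)) = s.card := by
    rw [Set.image_eq_range, finrank_span_eq_card]
    · simp
    · exact V.orthonormal.linearIndependent.comp _ Subtype.val_injective
  obtain ⟨x, hxK, hxS, hx⟩ :
      ∃ x ∈ Submodule.span ℝ (V '' s), x ∈ LinearMap.ker (S : E →ₗ[ℝ] F) ∧ x ≠ 0 := by
    by_contra! h
    have := Submodule.finrank_add_finrank_le_of_disjoint (Submodule.disjoint_def.mpr h)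
    have := LinearMap.finrank_range_add_finrank_ker (S : E →ₗ[ℝ] F)
    omega
  have hTx : c * ‖x‖ ≤ ‖(T - S) x‖ := by
    rw [_root_.sub_apply, show S x = 0 from hxS, sub_zero]
    refine mul_norm_le_norm_apply_of_inner_ne_zero hT hc fun i hi => hs i ?_
    by_contra h
    exact hi (V.inner_eq_zero_of_mem_span_image hxK h)
  exact le_of_mul_le_mul_right (hTx.trans ((T - S).le_opNorm x)) (norm_pos_iff.mpr hx)

theorem exists_finrank_range_le_opNorm_sub_le
    (hT : ∀ x, ‖T x‖ ^ 2 = ∑ i, (σ i * ⟪V i, x⟫_ℝ) ^ 2)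
    (hc : 0 ≤ c) {s : Finset ι} (hs : ∀ i ∉ s, |σ i| ≤ c) :
    ∃ S : E →L[ℝ] F, finrank ℝ (LinearMap.range (S : E →ₗ[ℝ] F)) ≤ s.card ∧ ‖T - S‖ ≤ c := by
  have hK : finrank ℝ (Submodule.span ℝ (V '' s)) ≤ s.card := by
    rw [Set.image_eq_range]
    exact (finrank_range_le_card _).trans (by simp)
  set K := Submodule.span ℝ (V '' s)
  refine ⟨T ∘L K.starProjection, ?_, ?_⟩
  · calc finrank ℝ (LinearMap.range ((T ∘L K.starProjection : E →L[ℝ] F) : E →ₗ[ℝ] F))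
        ≤ finrank ℝ (LinearMap.range (K.starProjection : E →ₗ[ℝ] E)) := by
          rw [ContinuousLinearMap.toLinearMap_comp, LinearMap.range_comp]
          exact Submodule.finrank_map_le _ _
      _ = finrank ℝ K := by rw [Submodule.range_starProjection]
      _ ≤ s.card := hK
  · refine ContinuousLinearMap.opNorm_le_bound _ hc fun x => ?_
    have hy : (T - T ∘L K.starProjection) x = T (Kᗮ.starProjection x) := by
      simp [Submodule.starProjection_orthogonal_val]
    rw [hy]
    refine (norm_apply_le_of_inner_ne_zero hT hc fun i hi => hs i ?_).trans ?_
    · intro h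
      exact hi (Submodule.inner_right_of_mem_orthogonal
        (Submodule.subset_span (Set.mem_image_of_mem V h)) (Kᗮ.starProjection_apply_mem x))
    · gcongr
      exact Kᗮ.norm_starProjection_apply_le x

end SingularValues

section MatrixSingularValues

variable {m n : Type*} [Fintype m] [Fintype n] [DecidableEq n]

theorem specNorm_sub (M N : Matrix m n ℝ) :
    specNorm (M - N) = ‖(toEuclideanLin M).toContinuousLinearMap
      - (toEuclideanLin N).toContinuousLinearMap‖ := by
  rw [specNorm, map_sub, map_sub]

theorem Matrix.rank_eq_finrank_range_toEuclideanLin_s6 (N : Matrix m n ℝ) :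
    N.rank = finrank ℝ (LinearMap.range (toEuclideanLin N)) := by
  classical
  rw [toEuclideanLin_eq_toLin_orthonormal]
  exact N.rank_eq_finrank_range_toLin _ _

theorem sval_eq_of_forall_le_specNorm_sub {M : Matrix m n ℝ} {j : ℕ} {c : ℝ}
    (hle : ∀ N : Matrix m n ℝ, N.rank < j → c ≤ specNorm (M - N))
    (hex : ∃ N : Matrix m n ℝ, N.rank < j ∧ specNorm (M - N) ≤ c) : sval M j = c := by
  obtain ⟨N, hN, hNc⟩ := hex
  have hlower :
      c ∈ lowerBounds {x | ∃ N : Matrix m n ℝ, N.rank < j ∧ x = specNorm (M - N)} := by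
    rintro _ ⟨N', hN', rfl⟩
    exact hle N' hN'
  exact le_antisymm ((csInf_le ⟨c, hlower⟩ ⟨N, hN, rfl⟩).trans hNc)
    (le_csInf ⟨_, N, hN, rfl⟩ hlower)

theorem norm_toEuclideanLin_sq (M : Matrix m n ℝ) (hM : (Mᴴ * M).IsHermitian)
    (x : EuclideanSpace ℝ n) :
    ‖toEuclideanLin M x‖ ^ 2
      = ∑ i, (√(hM.eigenvalues i) * ⟪hM.eigenvectorBasis i, x⟫_ℝ) ^ 2 := by
  classical
  set V := hM.eigenvectorBasis
  have hA : ∀ y, toEuclideanLin (Mᴴ * M) y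
      = LinearMap.adjoint (toEuclideanLin M) (toEuclideanLin M y) := by
    intro y
    rw [← toEuclideanLin_conjTranspose_eq_adjoint]
    ext i
    simp [Matrix.mulVec_mulVec]
  have hV : ∀ i, toEuclideanLin (Mᴴ * M) (V i) = hM.eigenvalues i • V i := by
    intro i
    rw [toLpLin_apply, hM.mulVec_eigenvectorBasis]
    rfl
  calc ‖toEuclideanLin M x‖ ^ 2 = ⟪x, toEuclideanLin (Mᴴ * M) x⟫_ℝ := by
        rw [hA, LinearMap.adjoint_inner_right, real_inner_self_eq_norm_sq]
    _ = ∑ i, ⟪x, V i⟫_ℝ * ⟪V i, toEuclideanLin (Mᴴ * M) x⟫_ℝ := (V.sum_inner_mul_inner _ _).symm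
    _ = _ := by
        refine Finset.sum_congr rfl fun i _ => ?_
        rw [← (isSymmetric_toEuclideanLin_iff.mpr hM) (V i) x, hV, real_inner_smul_left,
          mul_pow, Real.sq_sqrt (eigenvalues_conjTranspose_mul_self_nonneg M i), real_inner_comm]
        ring

-- `eigenvalues₀` lists the eigenvalues in decreasing order, and `sval` is indexed from `1`.
theorem sval_succ_eq_sqrt_eigenvalues₀ (M : Matrix m n ℝ) (hM : (Mᴴ * M).IsHermitian)
    (j : Fin (Fintype.card n)) : sval M (j + 1) = √(hM.eigenvalues₀ j) := by
  set e : Fin (Fintype.card n) ≃ n := Fintype.equivOfCardEq (Fintype.card_fin _)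
  set σ : n → ℝ := fun i => √(hM.eigenvalues i)
  have hσ : ∀ l, σ (e l) = √(hM.eigenvalues₀ l) := by simp [σ, e, IsHermitian.eigenvalues]
  have hT : ∀ x, ‖(toEuclideanLin M).toContinuousLinearMap x‖ ^ 2
      = ∑ i, (σ i * ⟪hM.eigenvectorBasis i, x⟫_ℝ) ^ 2 := norm_toEuclideanLin_sq M hM
  refine sval_eq_of_forall_le_specNorm_sub (fun N hN => ?_) ?_
  · rw [specNorm_sub]
    refine le_opNorm_sub_of_finrank_range_lt hT (Real.sqrt_nonneg _)
      (s := (Finset.Iic j).map e.toEmbedding) ?_ _ ?_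
    · intro i hi
      obtain ⟨l, hl, rfl⟩ := Finset.mem_map.mp hi
      rw [Equiv.coe_toEmbedding, hσ, abs_of_nonneg (Real.sqrt_nonneg _)]
      exact Real.sqrt_le_sqrt (hM.eigenvalues₀_antitone (Finset.mem_Iic.mp hl))
    · rw [Finset.card_map, Fin.card_Iic, LinearMap.coe_toContinuousLinearMap,
        ← N.rank_eq_finrank_range_toEuclideanLin_s6]
      exact hN
  · have hs : ∀ i ∉ (Finset.Iio j).map e.toEmbedding, |σ i| ≤ √(hM.eigenvalues₀ j) := by
      intro i hi
      obtain ⟨l, rfl⟩ := e.surjective i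
      have hl : j ≤ l := not_lt.mp fun h => hi (Finset.mem_map_of_mem _ (Finset.mem_Iio.mpr h))
      rw [hσ, abs_of_nonneg (Real.sqrt_nonneg _)]
      exact Real.sqrt_le_sqrt (hM.eigenvalues₀_antitone hl)
    obtain ⟨S, hS, hTS⟩ := exists_finrank_range_le_opNorm_sub_le hT (Real.sqrt_nonneg _) hs
    refine ⟨toEuclideanLin.symm (LinearMap.toContinuousLinearMap.symm S), ?_, ?_⟩
    · rw [Matrix.rank_eq_finrank_range_toEuclideanLin_s6, LinearEquiv.apply_symm_apply]
      refine hS.trans_lt ?_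
      simp
    · rwa [specNorm_sub, LinearEquiv.apply_symm_apply, LinearEquiv.apply_symm_apply]

theorem vol_eq_sqrt_det (M : Matrix m n ℝ) (h : Fintype.card n ≤ Fintype.card m) :
    vol M = √(Mᵀ * M).det := by
  have hM := isHermitian_conjTranspose_mul_self M
  set e : Fin (Fintype.card n) ≃ n := Fintype.equivOfCardEq (Fintype.card_fin _)
  have he : ∀ l, hM.eigenvalues (e l) = hM.eigenvalues₀ l := by simp [e, IsHermitian.eigenvalues]
  rw [vol, min_eq_right h]
  calc ∏ j ∈ Finset.Icc 1 (Fintype.card n), sval M j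
      = ∏ j : Fin (Fintype.card n), sval M (j + 1) := by
        rw [Fin.prod_univ_eq_prod_range (fun j => sval M (j + 1)), Finset.range_eq_Ico,
          Finset.prod_Ico_add' _ 0 _ 1, zero_add, Finset.Ico_add_one_right_eq_Icc]
    _ = ∏ i, √(hM.eigenvalues i) := by
        rw [← e.prod_comp]
        simp only [sval_succ_eq_sqrt_eigenvalues₀ M hM, he]
    _ = √(Mᵀ * M).det := by
        rw [← Real.sqrt_prod _ fun i _ => eigenvalues_conjTranspose_mul_self_nonneg M i,
          ← conjTranspose_eq_transpose_of_trivial, hM.det_eq_prod_eigenvalues]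
        simp

end MatrixSingularValues

section MaxVolume

variable {m n : Type*}

theorem Matrix.PosSemidef.det_le_det_add_smul_vecMulVec [Fintype n] [DecidableEq n]
    {A : Matrix n n ℝ} (hA : A.PosSemidef) (v : n → ℝ) {ρ : ℝ} (hρ : 0 ≤ ρ) :
    A.det ≤ (A + ρ • vecMulVec v v).det := by
  by_cases hdet : A.det = 0
  · rw [hdet]
    refine (hA.add (PosSemidef.smul ?_ hρ)).det_nonneg
    simpa using posSemidef_vecMulVec_self_star v
  · have := hA.inv.dotProduct_mulVec_nonneg v
    rw [← vecMulVec_smul, vecMulVec_eq Unit,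
      det_add_replicateCol_mul_replicateRow (ι := Unit) (isUnit_iff_ne_zero.mpr hdet),
      Matrix.mul_assoc, ← replicateCol_mulVec, det_unique (1 + _ : Matrix Unit Unit ℝ)]
    simp only [add_apply, one_apply_eq, replicateRow_mul_replicateCol_apply, smul_dotProduct,
      smul_eq_mul]
    simp only [star_trivial] at this
    exact le_mul_of_one_le_right hA.det_nonneg (le_add_of_nonneg_right (mul_nonneg hρ this))

theorem Matrix.det_updateCol_one {R : Type*} [CommRing R] [Fintype n] [DecidableEq n] (i : n)
    (w : n → R) : ((1 : Matrix n n R).updateCol i w).det = w i := by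
  simpa [Matrix.one_apply] using det_updateCol_sum (1 : Matrix n n R) i w

theorem Matrix.transpose_add_mul_add_of_transpose_mul_eq_zero {R : Type*} [CommRing R]
    [Fintype m] {X Y : Matrix m n R} (h : Xᵀ * Y = 0) :
    (X + Y)ᵀ * (X + Y) = Xᵀ * X + Yᵀ * Y := by
  have h' : Yᵀ * X = 0 := by
    rw [← transpose_transpose (Yᵀ * X), transpose_mul, transpose_transpose, h, transpose_zero]
  rw [transpose_add, Matrix.add_mul, Matrix.mul_add, Matrix.mul_add, h, h', add_zero, zero_add]

theorem sq_mul_det_gram_le_det_gram_updateCol [Fintype m] [Fintype n] [DecidableEq n]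
    (B : Matrix m n ℝ) (i : n) (w : n → ℝ) (r : m → ℝ) (hr : Bᵀ *ᵥ r = 0) :
    w i ^ 2 * (Bᵀ * B).det
      ≤ ((B.updateCol i (B *ᵥ w + r))ᵀ * B.updateCol i (B *ᵥ w + r)).det := by
  set E := (1 : Matrix n n ℝ).updateCol i w
  set R := vecMulVec r (Pi.single i (1 : ℝ))
  have hsplit : B.updateCol i (B *ᵥ w + r) = B * E + R := by
    ext p q
    by_cases hq : q = i
    · subst hq; simp [E, R, mul_updateCol, vecMulVec_apply]
    · simp [E, R, mul_updateCol, vecMulVec_apply, hq]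
  have hXR : (B * E)ᵀ * R = 0 := by
    rw [transpose_mul, Matrix.mul_assoc, mul_vecMulVec, hr, zero_vecMulVec, Matrix.mul_zero]
  have hRR : Rᵀ * R = (r ⬝ᵥ r) • vecMulVec (Pi.single i 1) (Pi.single i 1) := by
    rw [transpose_vecMulVec, vecMulVec_mul_vecMulVec, vecMulVec_smul]
  have hdetX : ((B * E)ᵀ * (B * E)).det = w i ^ 2 * (Bᵀ * B).det := by
    rw [transpose_mul, Matrix.mul_assoc, ← Matrix.mul_assoc Bᵀ, Matrix.det_mul, Matrix.det_mul,
      det_transpose, det_updateCol_one]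
    ring
  rw [hsplit, transpose_add_mul_add_of_transpose_mul_eq_zero hXR, hRR, ← hdetX]
  refine PosSemidef.det_le_det_add_smul_vecMulVec ?_ _
    (by simpa using dotProduct_star_self_nonneg r)
  simpa using posSemidef_conjTranspose_mul_self (B * E)

theorem sq_mul_det_gram_le_det_gram_updateCol_of_isUnit [Fintype m] [Fintype n] [DecidableEq n]
    (B : Matrix m n ℝ) (hB : IsUnit (Bᵀ * B).det) (i : n) (c : m → ℝ) :
    (((Bᵀ * B)⁻¹ * Bᵀ) *ᵥ c) i ^ 2 * (Bᵀ * B).det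
      ≤ ((B.updateCol i c)ᵀ * B.updateCol i c).det := by
  set w := ((Bᵀ * B)⁻¹ * Bᵀ) *ᵥ c
  have hr : Bᵀ *ᵥ (c - B *ᵥ w) = 0 := by
    rw [mulVec_sub, mulVec_mulVec, mulVec_mulVec, ← Matrix.mul_assoc, mul_nonsing_inv _ hB,
      Matrix.one_mul, sub_self]
  simpa using sq_mul_det_gram_le_det_gram_updateCol B i w _ hr

theorem Matrix.submatrix_fromCols_update_inl {α n' : Type*} [DecidableEq n] (B : Matrix m n α)
    (C : Matrix m n' α) (i : n) (t : n') :
    (fromCols B C).submatrix id (Function.update Sum.inl i (Sum.inr t))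
      = B.updateCol i fun p => C p t := by
  ext p q
  by_cases hq : q = i
  · subst hq; simp
  · simp [hq]

end MaxVolume

theorem statement_6 {m k n' : ℕ}
    (B : Matrix (Fin m) (Fin k) ℝ) (C : Matrix (Fin m) (Fin n') ℝ)
    (hrank : B.rank = k)
    (hmax : ∀ (i₀ : Fin k) (t : Fin n'),
      vol ((Matrix.fromCols B C).submatrix id
        (Function.update (Sum.inl : Fin k → Fin k ⊕ Fin n') i₀ (Sum.inr t))) ≤ vol B) :
    ∀ i j, |((Bᵀ * B)⁻¹ * Bᵀ * C) i j| ≤ 1 := by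
  intro i t
  have hkm : Fintype.card (Fin k) ≤ Fintype.card (Fin m) := by
    simpa [hrank] using B.rank_le_card_height
  have hinj : Function.Injective B.mulVec :=
    mulVec_injective_iff.mpr (linearIndependent_iff_card_eq_finrank_span.mpr
      (by rw [Set.finrank, ← rank_eq_finrank_span_cols, hrank, Fintype.card_fin]))
  have hG : 0 < (Bᵀ * B).det := by
    simpa using (PosDef.conjTranspose_mul_self B hinj).det_pos
  have hentry : ((Bᵀ * B)⁻¹ * Bᵀ * C) i t = (((Bᵀ * B)⁻¹ * Bᵀ) *ᵥ fun p => C p t) i := rfl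
  have hdet := sq_mul_det_gram_le_det_gram_updateCol_of_isUnit B hG.ne'.isUnit i fun p => C p t
  have hvol := hmax i t
  rw [submatrix_fromCols_update_inl, vol_eq_sqrt_det _ hkm, vol_eq_sqrt_det _ hkm,
    Real.sqrt_le_sqrt_iff hG.le] at hvol
  rw [hentry, ← sq_le_one_iff_abs_le_one]
  exact le_of_mul_le_mul_right (by rw [one_mul]; exact hdet.trans hvol) hG
end
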